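/- For every commutative ring A and every u ∈ A, the 2×2 matrix f_{ω0}(u) = [[900+660u+269u²+30u³+u⁴, −60u], [−14880u, 900−660u+269u²−30u³+u⁴]] (the matrix governing the L_{ω0}-isotypic block of the rational E₈ R-matrix) satisfies f_{ω0}(u) · f_{ω0}(−u) = (1−u²)(36−u²)(100−u²)(225−u²) · Id₂. -/
import Mathlib


open Matrix

/-- The 2×2 matrix governing the `L_{ω0}`-isotypic block of the rational E₈ R-matrix. -/
def fom0E8rat {A : Type*} [CommRing A] (u : A) : Matrix (Fin 2) (Fin 2) A :=
  !![900 + 660 * u + 269 * u ^ 2 + 30 * u ^ 3 + u ^ 4, -(60 * u);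
     -(14880 * u), 900 - 660 * u + 269 * u ^ 2 - 30 * u ^ 3 + u ^ 4]

/-- Unitarity of the rational E₈ R-matrix on the `L_{ω0}`-isotypic block. -/
theorem E8_om0_rational_unitarity {A : Type*} [CommRing A] (u : A) :
    fom0E8rat u * fom0E8rat (-u)
      = ((1 - u ^ 2) * (36 - u ^ 2) * (100 - u ^ 2) * (225 - u ^ 2)) •
          (1 : Matrix (Fin 2) (Fin 2) A) := by
  unfold fom0E8rat
  rw [show (1 : Matrix (Fin 2) (Fin 2) A) = !![1,0;0,1] from one_fin_two]
  ext i j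
  fin_cases i <;> fin_cases j <;> simp [Matrix.mul_apply, Fin.sum_univ_succ] <;> ring
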